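/- arXiv:1806.02316 — 5 statements merged into one kernel-verified Lean document; each statement's English description precedes it below -/
import Mathlib

section
/- The exponential generating function G_S(z) = Σ_{n≥0} (B_{n,S}/n!) z^n satisfies the differential equation G_S'(z) = G_S(z)·(e^z − α'(z)), where α(z) = Σ_{k∈S} z^k/k!, as formal power series. -/
/-!
Removing the block `insert a t` that contains a distinguished point `a` from a partition of
`insert a s` leaves an arbitrary partition of `s \ t`. Hence the number of partitions of an
`(n+1)`-set avoiding the block sizes in `S` is `∑ⱼ C(n, j) [j + 1 ∉ S] B_{n-j,S}`, and this binomial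
convolution is the coefficientwise form of `G' = G · (eᶻ - α'(z))`, because
`eᶻ - α'(z) = ∑_{j + 1 ∉ S} zʲ / j!`.
-/

open Finset PowerSeries

/-- `BS n S` is the number of set partitions of an `n`-element set
none of whose block sizes lies in `S` (so `BS 0 S = 1`). -/
noncomputable def BS (n : ℕ) (S : Set ℕ) : ℕ :=
  Nat.card {P : Finpartition (Finset.univ : Finset (Fin n)) // ∀ p ∈ P.parts, p.card ∉ S}

open Classical in
/-- `α(z) = ∑_{k ∈ S} z^k / k!` as a formal power series. -/
noncomputable def alphaPS (S : Set ℕ) : PowerSeries ℚ :=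
  PowerSeries.mk fun k => if k ∈ S then (1 : ℚ) / (k.factorial : ℚ) else 0

namespace Finpartition

variable {α : Type*} [DecidableEq α] {s t : Finset α} {a : α}

lemma parts_avoid_of_mem (P : Finpartition s) {b : Finset α} (hb : b ∈ P.parts) :
    (P.avoid b).parts = P.parts.erase b := by
  ext c
  rw [mem_avoid, mem_erase]
  constructor
  · rintro ⟨d, hd, hdb, rfl⟩
    have hne : d ≠ b := by rintro rfl; exact hdb le_rfl
    have hdisj : Disjoint d b := P.disjoint hd hb hne
    rw [Finset.sdiff_eq_self_of_disjoint hdisj]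
    exact ⟨hne, hd⟩
  · rintro ⟨hne, hc⟩
    have hcb : Disjoint c b := P.disjoint hc hb hne
    exact ⟨c, hc, fun hle => P.ne_bot hc (hcb.eq_bot_of_le hle),
      Finset.sdiff_eq_self_of_disjoint hcb⟩

theorem card_filter_part_eq_insert (ha : a ∉ s) (ht : t ⊆ s) (p : Finset (Finset α) → Prop)
    [DecidablePred p] :
    #{P : Finpartition (insert a s) | p P.parts ∧ P.part a = insert a t} =
      #{Q : Finpartition (s \ t) | p (insert (insert a t) Q.parts)} := by
  have hdiff : insert a s \ insert a t = s \ t := by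
    rw [insert_sdiff_insert, Finset.sdiff_insert_of_notMem ha]
  have hdisj : Disjoint (s \ t) (insert a t) := by
    rw [disjoint_insert_right]
    exact ⟨fun h => ha (sdiff_subset h), sdiff_disjoint⟩
  have hunion : s \ t ⊔ insert a t = insert a s := by
    rw [sup_eq_union, union_insert, sdiff_union_of_subset ht]
  have hnot (Q : Finpartition (s \ t)) : insert a t ∉ Q.parts := fun h =>
    ha (sdiff_subset (Q.le h (mem_insert_self a t)))
  have hrestore (P : Finpartition (insert a s)) (hP : P.part a = insert a t) :
      insert (insert a t) ((P.avoid (insert a t)).copy hdiff).parts = P.parts := by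
    have hmem : insert a t ∈ P.parts := hP ▸ P.part_mem.2 (mem_insert_self a s)
    rw [copy_parts, parts_avoid_of_mem P hmem, insert_erase hmem]
  have hextend (Q : Finpartition (s \ t)) :
      (Q.extend (insert_ne_empty a t) hdisj hunion).parts = insert (insert a t) Q.parts :=
    extend_parts ..
  have hblock (Q : Finpartition (s \ t)) :
      insert a t ∈ (Q.extend (insert_ne_empty a t) hdisj hunion).parts :=
    hextend Q ▸ mem_insert_self _ _
  refine card_nbij' (fun P => (P.avoid (insert a t)).copy hdiff)
    (fun Q => Q.extend (insert_ne_empty a t) hdisj hunion) ?_ ?_ ?_ ?_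
  · intro P hP
    simp only [coe_filter, Set.mem_ofPred_eq, mem_univ, true_and] at hP ⊢
    exact hrestore P hP.2 ▸ hP.1
  · intro Q hQ
    simp only [coe_filter, Set.mem_ofPred_eq, mem_univ, true_and] at hQ ⊢
    exact ⟨hextend Q ▸ hQ, part_eq_of_mem _ (hblock Q) (mem_insert_self a t)⟩
  · intro P hP
    simp only [coe_filter, Set.mem_ofPred_eq, mem_univ, true_and] at hP
    ext1
    rw [hextend, hrestore P hP.2]
  · intro Q _
    ext1
    simp only [copy_parts]
    rw [parts_avoid_of_mem _ (hblock Q), hextend, erase_insert (hnot Q)]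

end Finpartition

open Classical

noncomputable def numAvoidingPartitions (S : Set ℕ) {α : Type*} [DecidableEq α] (s : Finset α) :
    ℕ :=
  #{P : Finpartition s | ∀ p ∈ P.parts, #p ∉ S}

/-- The recurrence satisfied by `numAvoidingPartitions S (insert a s)` (see
`numAvoidingPartitions_insert`), with `j + 1` the size of the block containing `a`; defining it
separately shows that the count depends only on `#s`. -/
noncomputable def avoidingBell (S : Set ℕ) : ℕ → ℕ
  | 0 => 1
  | n + 1 => ∑ j : Fin (n + 1), n.choose j * if (j : ℕ) + 1 ∈ S then 0 else avoidingBell S (n - j)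

section NumAvoidingPartitions

variable (S : Set ℕ) {α : Type*} [DecidableEq α] {s : Finset α} {a : α}

theorem numAvoidingPartitions_empty : numAvoidingPartitions S (∅ : Finset α) = 1 := by
  have : Unique (Finpartition (∅ : Finset α)) := inferInstanceAs (Unique (Finpartition ⊥))
  unfold numAvoidingPartitions
  rw [filter_true_of_mem fun P _ => by simp [P.parts_eq_empty_iff.2 rfl]]
  exact Fintype.card_unique

theorem numAvoidingPartitions_insert (ha : a ∉ s) :
    numAvoidingPartitions S (insert a s) =
      ∑ t ∈ s.powerset, if #t + 1 ∈ S then 0 else numAvoidingPartitions S (s \ t) := by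
  unfold numAvoidingPartitions
  rw [card_eq_sum_card_fiberwise (f := fun P => (P.part a).erase a) (t := s.powerset)]
  · refine sum_congr rfl fun t ht => ?_
    rw [mem_powerset] at ht
    have hat : a ∉ t := fun h => ha (ht h)
    have hfiber (P : Finpartition (insert a s)) :
        (P.part a).erase a = t ↔ P.part a = insert a t :=
      erase_eq_iff_eq_insert (P.mem_part_self.2 (mem_insert_self a s)) hat
    rw [filter_filter]
    simp_rw [hfiber]
    rw [Finpartition.card_filter_part_eq_insert ha ht (fun parts => ∀ p ∈ parts, #p ∉ S)]
    simp only [forall_mem_insert, card_insert_of_notMem hat]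
    split_ifs with h <;> simp [h]
  · intro P _
    rw [mem_coe, mem_powerset, ← subset_insert_iff]
    exact P.part_subset a

theorem numAvoidingPartitions_eq_avoidingBell (s : Finset α) :
    numAvoidingPartitions S s = avoidingBell S #s := by
  induction s using Finset.strongInduction with
  | H s ih =>
    obtain rfl | ⟨a, ha⟩ := s.eq_empty_or_nonempty
    · rw [numAvoidingPartitions_empty, card_empty, avoidingBell]
    have has : a ∉ s.erase a := notMem_erase a s
    rw [← insert_erase ha]
    set s' := s.erase a
    rw [numAvoidingPartitions_insert S has, card_insert_of_notMem has, avoidingBell,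
      Fin.sum_univ_eq_sum_range
        (fun j => (#s').choose j * if j + 1 ∈ S then 0 else avoidingBell S (#s' - j))]
    calc _ = ∑ t ∈ s'.powerset, if #t + 1 ∈ S then 0 else avoidingBell S (#s' - #t) := by
          refine sum_congr rfl fun t ht => ?_
          rw [ih _ (sdiff_subset.trans_ssubset (erase_ssubset ha)),
            card_sdiff_of_subset (mem_powerset.1 ht)]
      _ = _ := by
          rw [sum_powerset_apply_card (fun j => if j + 1 ∈ S then 0 else avoidingBell S (#s' - j))]
          simp only [smul_eq_mul]

end NumAvoidingPartitions

open Nat in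
theorem derivative_mk_div_factorial_eq_mul {K : Type*} [Field K] [CharZero K] {b w : ℕ → K}
    (h : ∀ n, b (n + 1) = ∑ k ∈ range (n + 1), n.choose k * w k * b (n - k)) :
    derivative K (mk fun n => b n / n !) = mk (fun n => b n / n !) * mk (fun n => w n / n !) := by
  ext n
  rw [coeff_derivative, coeff_mul, ← Nat.sum_antidiagonal_swap,
    Nat.sum_antidiagonal_eq_sum_range_succ_mk, coeff_mk, h, factorial_succ, sum_div, sum_mul]
  refine sum_congr rfl fun k hk => ?_
  simp only [Prod.swap, coeff_mk, Nat.cast_choose K (mem_range_succ_iff.1 hk)]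
  push_cast
  have : (n ! : K) ≠ 0 := Nat.cast_ne_zero.2 n.factorial_ne_zero
  field_simp

theorem BS_eq_avoidingBell (n : ℕ) (S : Set ℕ) : BS n S = avoidingBell S n := by
  have h := numAvoidingPartitions_eq_avoidingBell S (univ : Finset (Fin n))
  rw [card_univ, Fintype.card_fin] at h
  rw [← h, BS, numAvoidingPartitions, Nat.card_eq_fintype_card, Fintype.card_subtype]
  convert rfl

theorem cast_BS_succ (S : Set ℕ) (n : ℕ) :
    (BS (n + 1) S : ℚ) =
      ∑ k ∈ range (n + 1), n.choose k * (if k + 1 ∈ S then 0 else 1) * (BS (n - k) S : ℚ) := by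
  rw [BS_eq_avoidingBell, avoidingBell, Fin.sum_univ_eq_sum_range
    (fun k => n.choose k * if k + 1 ∈ S then 0 else avoidingBell S (n - k))]
  push_cast
  refine sum_congr rfl fun k _ => ?_
  split_ifs <;> simp [BS_eq_avoidingBell]

open Nat in
theorem exp_sub_derivative_alphaPS (S : Set ℕ) :
    exp ℚ - derivative ℚ (alphaPS S) = mk fun n => (if n + 1 ∈ S then 0 else 1 : ℚ) / n ! := by
  ext n
  rw [map_sub, coeff_exp, coeff_derivative, alphaPS, coeff_mk, coeff_mk]
  split_ifs
  · rw [factorial_succ]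
    push_cast
    field_simp
    ring
  · simp

theorem egf_setPartitions_avoiding_ODE_general (S : Set ℕ) :
    letI G : PowerSeries ℚ := PowerSeries.mk fun n => (BS n S : ℚ) / (n.factorial : ℚ)
    PowerSeries.derivative ℚ G =
      G * (PowerSeries.exp ℚ - PowerSeries.derivative ℚ (alphaPS S)) := by
  rw [exp_sub_derivative_alphaPS]
  exact derivative_mk_div_factorial_eq_mul (cast_BS_succ S)

/-- The EGF `G_S` of `B_{n,S}` satisfies `G_S' = G_S · (e^z − α'(z))`
as formal power series. -/
theorem egf_setPartitions_avoiding_ODE (S : Set ℕ) (h0 : 0 ∉ S) :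
    letI G : PowerSeries ℚ := PowerSeries.mk fun n => (BS n S : ℚ) / (n.factorial : ℚ)
    PowerSeries.derivative ℚ G =
      G * (PowerSeries.exp ℚ - PowerSeries.derivative ℚ (alphaPS S)) :=
  egf_setPartitions_avoiding_ODE_general S
end

section
/- For all n ≥ 0, the Bell number B_n satisfies B_n = Σ_{k=0}^{n} C(n,k) · P_k · B_{n−k, k+1}, where P_k is the number of practical set partitions of a k-element set and B_{m,j} is the number of set partitions of an m-element set all of whose blocks have size greater than j. -/
open Finset

/-- The `n`-th Bell number: the number of set partitions of an `n`-element set. -/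
noncomputable def Bell (n : ℕ) : ℕ :=
  Nat.card (Finpartition (Finset.univ : Finset (Fin n)))

/-- `Brough m j` is the number of set partitions of an `m`-element set all of whose
blocks have size strictly greater than `j` (so `Brough 0 j = 1`). -/
noncomputable def Brough (m j : ℕ) : ℕ :=
  Nat.card {P : Finpartition (Finset.univ : Finset (Fin m)) // ∀ p ∈ P.parts, j < p.card}

/-- A set partition of `Fin n` is practical if every integer from `0` to `n`
is a sum of the sizes of some subset of its blocks. -/
def IsPractical {n : ℕ} (P : Finpartition (Finset.univ : Finset (Fin n))) : Prop :=
  ∀ k ≤ n, ∃ t ⊆ P.parts, ∑ p ∈ t, p.card = k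

/-- `PP n` is the number of practical set partitions of an `n`-element set. -/
noncomputable def PP (n : ℕ) : ℕ :=
  Nat.card {P : Finpartition (Finset.univ : Finset (Fin n)) // IsPractical P}

/-!
Every set partition splits canonically into a practical part and a rough part. Call `B ⊆ A` a
practical split of a family `A` of weights if the subset sums of `B` fill `[0, ∑ B]` and every
element of `A \ B` weighs more than `∑ B + 1`. A split exists: let `k` be least such that the
elements of weight `≤ k + 1` weigh at most `k` in total, and take these elements. For `c ≤ k` the
elements of weight `≤ c` weigh at least `c`, so adding the elements of weight `c + 1` keeps the
subset sums an interval. The split is unique: of two splits, the one with the smaller sum, `B`,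
lies inside the other, `B'`, and if `B ≠ B'` then `∑ B + 1 ≤ ∑ B'` is a subset sum of `B'` that can
only use elements of `B`, which is impossible.

Applied to block sizes, a partition of an `n`-set is thus the same as a `k`-subset `S`, a practical
partition of `S`, and a partition of the complement into blocks of size `> k + 1`.
-/

section SubsetSums

variable {ι : Type*} {w : ι → ℕ}

variable (w) in
def SubsetSumsCover (A : Finset ι) (m : ℕ) : Prop :=
  ∀ j ≤ m, ∃ t ⊆ A, ∑ i ∈ t, w i = j

theorem subsetSumsCover_map_iff {κ : Type*} {w : κ → ℕ} (g : ι ↪ κ) (A : Finset ι) (m : ℕ) :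
    SubsetSumsCover w (A.map g) m ↔ SubsetSumsCover (w ∘ g) A m := by
  refine forall₂_congr fun j _ => ⟨?_, ?_⟩
  · rintro ⟨t, ht, rfl⟩
    obtain ⟨u, hu, rfl⟩ := subset_map_iff.1 ht
    exact ⟨u, hu, (sum_map u g w).symm⟩
  · rintro ⟨u, hu, rfl⟩
    exact ⟨u.map g, map_subset_map.2 hu, sum_map u g w⟩

variable [DecidableEq ι]

theorem SubsetSumsCover.insert_of_le {G : Finset ι} {s : ℕ} {a : ι} (hG : SubsetSumsCover w G s)
    (ha : a ∉ G) (hwa : w a ≤ s + 1) : SubsetSumsCover w (insert a G) (s + w a) := by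
  intro j hj
  by_cases hjs : j ≤ s
  · obtain ⟨t, htG, rfl⟩ := hG j hjs
    exact ⟨t, htG.trans (subset_insert a G), rfl⟩
  · obtain ⟨t, htG, ht⟩ := hG (j - w a) (by omega)
    have hat : a ∉ t := fun h => ha (htG h)
    exact ⟨insert a t, insert_subset_insert a htG, by rw [sum_insert hat, ht]; omega⟩

theorem SubsetSumsCover.union_of_le {F G : Finset ι} {s : ℕ} (hG : SubsetSumsCover w G s)
    (hFG : Disjoint F G) (hF : ∀ i ∈ F, w i ≤ s + 1) :
    SubsetSumsCover w (F ∪ G) (s + ∑ i ∈ F, w i) := by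
  induction F using Finset.induction_on with
  | empty => simpa using hG
  | @insert a F haF ih =>
    rw [disjoint_insert_left] at hFG
    have hcover := ih hFG.2 (fun i hi => hF i (mem_insert_of_mem hi))
    rw [insert_union, sum_insert haF, add_comm (w a), ← add_assoc]
    refine hcover.insert_of_le (by simp [haF, hFG.1]) ?_
    have := hF a (mem_insert_self a F)
    omega

theorem subsetSumsCover_filter_le {A : Finset ι} {c : ℕ}
    (h : ∀ d < c, d ≤ ∑ i ∈ A with w i ≤ d, w i) :
    SubsetSumsCover w {i ∈ A | w i ≤ c} (∑ i ∈ A with w i ≤ c, w i) := by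
  induction c with
  | zero =>
    intro j hj
    have : ∑ i ∈ A with w i ≤ 0, w i = 0 := sum_eq_zero (fun i hi => by simp_all)
    exact ⟨∅, empty_subset _, by rw [sum_empty]; omega⟩
  | succ c ih =>
    have hsplit : {i ∈ A | w i ≤ c + 1} = {i ∈ A | w i = c + 1} ∪ {i ∈ A | w i ≤ c} := by
      rw [← filter_or]
      exact filter_congr (fun i _ => by omega)
    have hdisj : Disjoint {i ∈ A | w i = c + 1} {i ∈ A | w i ≤ c} :=
      disjoint_filter.2 (fun i _ h => by omega)
    have hc := h c (by omega)
    rw [hsplit, sum_union hdisj, add_comm (∑ i ∈ A with w i = c + 1, w i)]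
    exact (ih (fun d hd => h d (by omega))).union_of_le hdisj
      (fun i hi => by have := (mem_filter.1 hi).2; omega)

variable (w) in
def IsPracticalSplit (A B : Finset ι) : Prop :=
  B ⊆ A ∧ SubsetSumsCover w B (∑ i ∈ B, w i) ∧ ∀ i ∈ A \ B, ∑ i ∈ B, w i + 1 < w i

variable (w) in
theorem exists_isPracticalSplit (A : Finset ι) : ∃ B, IsPracticalSplit w A B := by
  have hex : ∃ c, ∑ i ∈ A with w i ≤ c + 1, w i ≤ c :=
    ⟨∑ i ∈ A, w i, sum_le_sum_of_subset (filter_subset _ _)⟩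
  set k := Nat.find hex
  have hk : ∑ i ∈ A with w i ≤ k + 1, w i ≤ k := Nat.find_spec hex
  refine ⟨{i ∈ A | w i ≤ k + 1}, filter_subset _ _, subsetSumsCover_filter_le ?_, ?_⟩
  · intro d hd
    cases d with
    | zero => exact Nat.zero_le _
    | succ d => exact Nat.lt_of_not_le (Nat.find_min hex (show d < k by omega))
  · intro i hi
    simp only [mem_sdiff, mem_filter, not_and, not_le] at hi
    have := hi.2 hi.1
    omega

theorem IsPracticalSplit.subset_of_sum_le {A B B' : Finset ι} (hB : IsPracticalSplit w A B)
    (hB' : IsPracticalSplit w A B') (hle : ∑ i ∈ B, w i ≤ ∑ i ∈ B', w i) : B ⊆ B' := by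
  intro i hi
  by_contra hi'
  have := hB'.2.2 i (mem_sdiff.2 ⟨hB.1 hi, hi'⟩)
  have := single_le_sum (fun j _ => Nat.zero_le (w j)) hi
  omega

theorem IsPracticalSplit.eq_of_sum_le {A B B' : Finset ι} (hB : IsPracticalSplit w A B)
    (hB' : IsPracticalSplit w A B') (hle : ∑ i ∈ B, w i ≤ ∑ i ∈ B', w i) : B = B' := by
  have hsub := hB.subset_of_sum_le hB' hle
  refine hsub.antisymm fun i hi => ?_
  by_contra hiB
  have hheavy : ∀ i ∈ B' \ B, ∑ j ∈ B, w j + 1 < w i := fun i hi =>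
    hB.2.2 i (mem_sdiff.2 ⟨hB'.1 (mem_sdiff.1 hi).1, (mem_sdiff.1 hi).2⟩)
  have hsum : w i + ∑ j ∈ B, w j ≤ ∑ j ∈ B', w j := by
    rw [← sum_insert hiB]
    exact sum_le_sum_of_subset (insert_subset hi hsub)
  obtain ⟨t, htB', ht⟩ := hB'.2.1 (∑ j ∈ B, w j + 1)
    (by have := hheavy i (mem_sdiff.2 ⟨hi, hiB⟩); omega)
  have htB : t ⊆ B := fun j hj => by
    by_contra hjB
    have := hheavy j (mem_sdiff.2 ⟨htB' hj, hjB⟩)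
    have := single_le_sum (fun j _ => Nat.zero_le (w j)) hj
    omega
  have := sum_le_sum_of_subset htB (f := w)
  omega

theorem IsPracticalSplit.unique {A B B' : Finset ι} (hB : IsPracticalSplit w A B)
    (hB' : IsPracticalSplit w A B') : B = B' := by
  rcases le_total (∑ i ∈ B, w i) (∑ i ∈ B', w i) with hle | hle
  · exact hB.eq_of_sum_le hB' hle
  · exact (hB'.eq_of_sum_le hB hle).symm

end SubsetSums

noncomputable def Finset.finEmb {β : Type*} (s : Finset β) : Fin #s ↪ β :=
  s.equivFin.symm.toEmbedding.trans (.subtype _)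

namespace Finpartition

variable {α β : Type*} [DecidableEq α] [DecidableEq β]

section MapEmb

variable (f : α ↪ β) {s : Finset α} {t : Finset β} (h : s.map f = t)

theorem supIndep_map_mapEmbedding_iff (U : Finset (Finset α)) :
    (U.map (Finset.mapEmbedding f).toEmbedding).SupIndep id ↔ U.SupIndep id := by
  rw [supIndep_iff_pairwiseDisjoint, supIndep_iff_pairwiseDisjoint, coe_map,
    (Finset.mapEmbedding f).toEmbedding.injective.injOn.pairwiseDisjoint_image]
  simp [Set.PairwiseDisjoint, Set.Pairwise, Function.onFun]

theorem sup_map_mapEmbedding (U : Finset (Finset α)) :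
    (U.map (Finset.mapEmbedding f).toEmbedding).sup id = (U.sup id).map f := by
  induction U using Finset.induction_on with
  | empty => simp
  | insert a U ha ih => simp_all [map_union]

def mapEmb (P : Finpartition s) : Finpartition t where
  parts := P.parts.map (Finset.mapEmbedding f).toEmbedding
  supIndep := (supIndep_map_mapEmbedding_iff f _).2 P.supIndep
  sup_parts := by rw [sup_map_mapEmbedding, P.sup_parts, h]
  bot_notMem := by simp

theorem mapEmb_bijective : Function.Bijective (mapEmb f h) := by
  subst h
  refine ⟨fun P Q hPQ => Finpartition.ext (map_injective _ (congrArg parts hPQ)), fun Q => ?_⟩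
  have hQ : Q.parts ⊆ s.powerset.map (Finset.mapEmbedding f).toEmbedding := fun q hq => by
    obtain ⟨u, hu, rfl⟩ := subset_map_iff.1 (Q.le hq)
    exact mem_map_of_mem _ (mem_powerset.2 hu)
  obtain ⟨U, -, hU⟩ := subset_map_iff.1 hQ
  refine ⟨⟨U, (supIndep_map_mapEmbedding_iff f U).1 (hU ▸ Q.supIndep),
    map_injective f (by rw [← sup_map_mapEmbedding, ← hU, Q.sup_parts]),
    fun h => Q.bot_notMem (by simpa [hU] using h)⟩, Finpartition.ext hU.symm⟩

end MapEmb

noncomputable def finEquiv (s : Finset β) :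
    Finpartition (univ : Finset (Fin #s)) ≃ Finpartition s :=
  Equiv.ofBijective _ (mapEmb_bijective s.finEmb (by rw [finEmb, ← map_map]; simp [attach_map_val]))

theorem finEquiv_parts (s : Finset β) (P : Finpartition (univ : Finset (Fin #s))) :
    (finEquiv s P).parts = P.parts.map (Finset.mapEmbedding s.finEmb).toEmbedding :=
  rfl

def disjUnion {s t : Finset α} (P : Finpartition s) (Q : Finpartition t) (hst : Disjoint s t) :
    Finpartition (s ∪ t) where
  parts := P.parts ∪ Q.parts
  supIndep := by
    rw [supIndep_iff_pairwiseDisjoint, coe_union, Set.pairwiseDisjoint_union]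
    exact ⟨P.disjoint, Q.disjoint, fun _ hp _ hq _ => hst.mono (P.le hp) (Q.le hq)⟩
  sup_parts := by rw [sup_union, P.sup_parts, Q.sup_parts, sup_eq_union]
  bot_notMem := by simp

theorem disjoint_parts_of_disjoint {s t : Finset α} (P : Finpartition s) (Q : Finpartition t)
    (hst : Disjoint s t) : Disjoint P.parts Q.parts :=
  disjoint_left.2 fun _ hP hQ => P.ne_bot hP (disjoint_self.1 (hst.mono (P.le hP) (Q.le hQ)))

variable {s : Finset α} (P : Finpartition s)

theorem card_sup_of_subset_parts {B : Finset (Finset α)} (hB : B ⊆ P.parts) :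
    #(B.sup id) = ∑ p ∈ B, #p :=
  ((P.ofSubset hB rfl).sum_card_parts).symm

theorem sup_sdiff_of_subset_parts {B : Finset (Finset α)} (hB : B ⊆ P.parts) :
    (P.parts \ B).sup id = s \ B.sup id := by
  have hdisj : Disjoint ((P.parts \ B).sup id) (B.sup id) := by
    refine Finset.disjoint_sup_left.2 fun p hp => Finset.disjoint_sup_right.2 fun q hq => ?_
    exact P.disjoint (mem_sdiff.1 hp).1 (hB hq) (ne_of_mem_of_not_mem hq (mem_sdiff.1 hp).2).symm
  have hs : (P.parts \ B).sup id ∪ B.sup id = s := by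
    rw [← sup_eq_union, ← sup_union, sdiff_union_of_subset hB, P.sup_parts]
  rw [← union_sdiff_cancel_right hdisj, hs]

noncomputable def practicalCore : Finset (Finset α) :=
  (exists_isPracticalSplit card P.parts).choose

theorem isPracticalSplit_practicalCore : IsPracticalSplit card P.parts P.practicalCore :=
  (exists_isPracticalSplit card P.parts).choose_spec

theorem practicalCore_eq {B : Finset (Finset α)} (hB : IsPracticalSplit card P.parts B) :
    P.practicalCore = B :=
  P.isPracticalSplit_practicalCore.unique hB

end Finpartition

open Finpartition

theorem natCard_subsetSumsCover_eq_PP {β : Type*} [DecidableEq β] (s : Finset β) :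
    Nat.card {Q : Finpartition s // SubsetSumsCover card Q.parts #s} = PP #s := by
  refine (Nat.card_congr ((finEquiv s).subtypeEquiv fun P => ?_)).symm
  have hcard : card ∘ (Finset.mapEmbedding s.finEmb).toEmbedding = card :=
    funext fun _ => card_map _
  rw [finEquiv_parts, subsetSumsCover_map_iff, hcard]
  rfl

theorem natCard_forall_lt_card_eq_Brough {β : Type*} [DecidableEq β] (s : Finset β) (j : ℕ) :
    Nat.card {R : Finpartition s // ∀ p ∈ R.parts, j < #p} = Brough #s j := by
  refine (Nat.card_congr ((finEquiv s).subtypeEquiv fun P => ?_)).symm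
  simp [finEquiv_parts]

section Decomposition

variable {α : Type*} [Fintype α] [DecidableEq α] {S : Finset α}

def Finpartition.ofCompl (Q : Finpartition S) (R : Finpartition Sᶜ) :
    Finpartition (univ : Finset α) :=
  (Q.disjUnion R disjoint_compl_right).copy (union_compl S)

theorem Finpartition.practicalCore_ofCompl {Q : Finpartition S} {R : Finpartition Sᶜ}
    (hQ : SubsetSumsCover card Q.parts #S) (hR : ∀ p ∈ R.parts, #S + 1 < #p) :
    (Q.ofCompl R).practicalCore = Q.parts := by
  refine practicalCore_eq _ ⟨subset_union_left, by rwa [Q.sum_card_parts], fun p hp => ?_⟩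
  obtain ⟨hpQR, hpQ⟩ := mem_sdiff.1 hp
  rw [Q.sum_card_parts]
  exact hR p ((mem_union.1 hpQR).resolve_left hpQ)

noncomputable def practicalDecomposition (S : Finset α) :
    {P : Finpartition (univ : Finset α) // P.practicalCore.sup id = S} ≃
      {Q : Finpartition S // SubsetSumsCover card Q.parts #S} ×
        {R : Finpartition Sᶜ // ∀ p ∈ R.parts, #S + 1 < #p} where
  toFun P :=
    have hsplit := P.1.isPracticalSplit_practicalCore
    have hcard : ∑ p ∈ P.1.practicalCore, #p = #S :=
      (card_sup_of_subset_parts _ hsplit.1).symm.trans (congrArg card P.2)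
    (⟨P.1.ofSubset hsplit.1 P.2, by simpa [hcard] using hsplit.2.1⟩,
      ⟨P.1.ofSubset sdiff_subset
          (by rw [sup_sdiff_of_subset_parts _ hsplit.1, P.2, compl_eq_univ_sdiff]),
        fun p hp => hcard ▸ hsplit.2.2 p hp⟩)
  invFun QR :=
    ⟨QR.1.1.ofCompl QR.2.1, by rw [practicalCore_ofCompl QR.1.2 QR.2.2, QR.1.1.sup_parts]⟩
  left_inv P := Subtype.ext (Finpartition.ext
    (union_sdiff_of_subset P.1.isPracticalSplit_practicalCore.1))
  right_inv QR := by
    have hcore := practicalCore_ofCompl QR.1.2 QR.2.2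
    refine Prod.ext (Subtype.ext (Finpartition.ext hcore)) (Subtype.ext (Finpartition.ext ?_))
    change (QR.1.1.parts ∪ QR.2.1.parts) \ _ = _
    rw [hcore, union_sdiff_cancel_left (disjoint_parts_of_disjoint _ _ disjoint_compl_right)]

theorem natCard_finpartition_univ_eq_sum :
    Nat.card (Finpartition (univ : Finset α)) =
      ∑ S : Finset α, PP #S * Brough (Fintype.card α - #S) (#S + 1) := by
  rw [← Nat.card_congr (Equiv.sigmaFiberEquiv fun P : Finpartition (univ : Finset α) =>
    P.practicalCore.sup id), Nat.card_sigma]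
  refine sum_congr rfl fun S _ => ?_
  rw [Nat.card_congr (practicalDecomposition S), Nat.card_prod, natCard_subsetSumsCover_eq_PP,
    natCard_forall_lt_card_eq_Brough, card_compl]

end Decomposition

/-- `B_n = ∑_{k=0}^n C(n,k) · P_k · B_{n−k, k+1}`. -/
theorem bell_eq_sum_practical_rough (n : ℕ) :
    Bell n = ∑ k ∈ Finset.range (n + 1), n.choose k * PP k * Brough (n - k) (k + 1) := by
  rw [Bell, natCard_finpartition_univ_eq_sum, Fintype.card_fin, ← powerset_univ,
    sum_powerset_apply_card (fun k => PP k * Brough (n - k) (k + 1)), card_univ, Fintype.card_fin]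
  simp only [smul_eq_mul, mul_assoc]
end

section
/- For every real r > 0 and integers n ≥ 1, m ≥ 0, the number of m-rough set partitions satisfies B_{n,m} ≤ n! · exp(e^r − β_m(r)) / r^n, where β_m(r) = Σ_{j=0}^{m} r^j/j!. -/
open Finset

/-! Write `T = e^r − β_m(r) = ∑_{s > m} r^s/s!`. Labelling the `p` blocks of an `m`-rough
partition of `Fin n` in all `p!` ways gives distinct maps `Fin n → Fin p` all of whose fibres
have more than `m` points. Splitting off one fibre, of some size `s > m`, bounds the number of
such maps by `∑_s C(n, s)` times the number for `p - 1` colours on `n - s` points; by induction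
on `p` it is at most `n! T^p / r^n`, the Cauchy-type bound on the `n`-th coefficient of
`(e^z − β_m(z))^p`. Summing over `p`, `B_{n,m} ≤ ∑_p n! T^p / (p! r^n) ≤ n! e^T / r^n`. -/

open Nat

noncomputable def expTail (m : ℕ) (r : ℝ) : ℝ :=
  Real.exp r - ∑ j ∈ range (m + 1), r ^ j / j !

lemma sum_Icc_pow_div_factorial_le_expTail {r : ℝ} (hr : 0 ≤ r) (m k : ℕ) :
    ∑ s ∈ Icc (m + 1) k, r ^ s / s ! ≤ expTail m r := by
  have hdisj : Disjoint (range (m + 1)) (Icc (m + 1) k) :=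
    disjoint_left.2 fun s hs hs' => by simp only [mem_range, mem_Icc] at hs hs'; omega
  have hsub : range (m + 1) ∪ Icc (m + 1) k ⊆ range (m + 1 + k) := by
    intro s; simp only [mem_union, mem_range, mem_Icc]; omega
  have := calc
    ∑ j ∈ range (m + 1), r ^ j / j ! + ∑ s ∈ Icc (m + 1) k, r ^ s / s !
        = ∑ s ∈ range (m + 1) ∪ Icc (m + 1) k, r ^ s / s ! := (sum_union hdisj).symm
    _ ≤ ∑ s ∈ range (m + 1 + k), r ^ s / s ! :=
        sum_le_sum_of_subset_of_nonneg hsub fun _ _ _ => by positivity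
    _ ≤ Real.exp r := Real.sum_le_exp_of_nonneg hr _
  rw [expTail]
  linarith

lemma expTail_nonneg {r : ℝ} (hr : 0 ≤ r) (m : ℕ) : 0 ≤ expTail m r := by
  simpa [Icc_eq_empty_of_lt (lt_add_one m)] using sum_Icc_pow_div_factorial_le_expTail hr m m

lemma sum_card_gt_eq_sum_choose_smul {α M : Type*} [Fintype α] [AddCommMonoid M] (m : ℕ)
    (f : ℕ → M) :
    ∑ t : {t : Finset α // m < #t}, f #t.1 =
      ∑ s ∈ Icc (m + 1) (Fintype.card α), (Fintype.card α).choose s • f s := by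
  classical
  have hIcc : Icc (m + 1) (Fintype.card α) = {s ∈ range (Fintype.card α + 1) | m < s} := by
    ext s; simp only [mem_Icc, mem_filter, mem_range]; omega
  rw [← subtype_univ, sum_subtype_eq_sum_filter (fun t => f #t), sum_filter, ← powerset_univ,
    sum_powerset_apply_card (fun s => if m < s then f s else 0), hIcc, sum_filter, Finset.card_univ]
  simp only [smul_ite, smul_zero]

lemma choose_mul_factorial_sub {k s : ℕ} (hs : s ≤ k) :
    (k.choose s : ℝ) * (k - s)! = k ! / s ! := by
  rw [Nat.cast_choose ℝ hs]
  field_simp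

lemma card_filter_subtype_eq {α β : Type*} [Fintype α] [DecidableEq β] {s : Finset α}
    {g : α → β} {b : β} (h : ∀ a, g a = b → a ∈ s) :
    #{a : s | g a = b} = #{a | g a = b} := by
  rw [← card_map (Function.Embedding.subtype _)]
  congr 1
  ext a
  simp only [mem_map, mem_filter, mem_univ, true_and, Function.Embedding.subtype_apply]
  exact ⟨by rintro ⟨a, rfl, rfl⟩; rfl, fun ha => ⟨⟨a, h a ha⟩, ha, rfl⟩⟩

section RoughMap

variable {m : ℕ} {α β : Type*} [Fintype α] [DecidableEq α] [DecidableEq β]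

variable (m α β) in
def RoughMap : Type _ := {f : α → β // ∀ b, m < #{a | f a = b}}

instance [Fintype β] : Fintype (RoughMap m α β) := Subtype.fintype _

def RoughMap.splitFiber (b₀ : β) (f : RoughMap m α β) :
    Σ t : {t : Finset α // m < #t}, RoughMap m ↥(t.1ᶜ) {b // b ≠ b₀} :=
  ⟨⟨({a | f.1 a = b₀} : Finset α), f.2 b₀⟩, fun a => ⟨f.1 a, by simpa using a.2⟩, fun b => by
    simp only [Subtype.ext_iff]
    rw [card_filter_subtype_eq fun a ha => by simpa [ha] using b.2]
    exact f.2 b⟩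

lemma RoughMap.splitFiber_injective (b₀ : β) :
    Function.Injective (RoughMap.splitFiber (m := m) (α := α) b₀) := by
  let glue (x : Σ t : {t : Finset α // m < #t}, RoughMap m ↥(t.1ᶜ) {b // b ≠ b₀}) (a : α) : β :=
    if h : a ∈ x.1.1ᶜ then (x.2.1 ⟨a, h⟩).1 else b₀
  have glue_splitFiber (f : RoughMap m α β) : glue (f.splitFiber b₀) = f.1 := by
    funext a
    by_cases h : f.1 a = b₀ <;> simp [glue, RoughMap.splitFiber, h]
  intro f g hfg
  exact Subtype.ext <| by rw [← glue_splitFiber f, hfg, glue_splitFiber]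

end RoughMap

theorem card_roughMap_mul_pow_le {r : ℝ} (hr : 0 ≤ r) (m p : ℕ) (α β : Type*) [Fintype α]
    [DecidableEq α] [Fintype β] [DecidableEq β] (hβ : Fintype.card β = p) :
    (Fintype.card (RoughMap m α β) : ℝ) * r ^ Fintype.card α ≤
      (Fintype.card α)! * expTail m r ^ p := by
  induction p generalizing α β with
  | zero =>
    have hle : Fintype.card (RoughMap m α β) ≤ 0 ^ Fintype.card α := by
      simpa [Fintype.card_fun, hβ] using
        Fintype.card_le_of_injective (fun f : RoughMap m α β => f.1) fun _ _ => Subtype.ext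
    calc (Fintype.card (RoughMap m α β) : ℝ) * r ^ Fintype.card α
        ≤ (0 * r) ^ Fintype.card α := by rw [mul_pow]; gcongr; exact_mod_cast hle
      _ ≤ 1 := pow_le_one₀ (by simp) (by simp)
      _ ≤ (Fintype.card α)! * expTail m r ^ 0 := by
          rw [pow_zero, mul_one]; exact_mod_cast factorial_pos _
  | succ p ih =>
    obtain ⟨b₀⟩ : Nonempty β := Fintype.card_pos_iff.1 (by omega)
    have hβ' : Fintype.card {b // b ≠ b₀} = p := by
      rw [Fintype.card_subtype_compl, Fintype.card_subtype_eq, hβ, add_tsub_cancel_right]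
    set k := Fintype.card α
    have hpow (t : Finset α) : r ^ (k - #t) * r ^ #t = r ^ k := by
      rw [← pow_add, Nat.sub_add_cancel (card_le_univ t)]
    have hsplit : Fintype.card (RoughMap m α β) ≤
        ∑ t : {t : Finset α // m < #t}, Fintype.card (RoughMap m ↥(t.1ᶜ) {b // b ≠ b₀}) := by
      simpa [Fintype.card_sigma] using
        Fintype.card_le_of_injective _ (RoughMap.splitFiber_injective (m := m) (α := α) b₀)
    calc (Fintype.card (RoughMap m α β) : ℝ) * r ^ k
        ≤ ∑ t : {t : Finset α // m < #t},
            Fintype.card (RoughMap m ↥(t.1ᶜ) {b // b ≠ b₀}) * r ^ (k - #t.1) * r ^ #t.1 := by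
          simp_rw [mul_assoc, hpow, ← sum_mul]
          gcongr
          exact_mod_cast hsplit
      _ ≤ ∑ t : {t : Finset α // m < #t}, (k - #t.1)! * expTail m r ^ p * r ^ #t.1 := by
          refine sum_le_sum fun t _ => mul_le_mul_of_nonneg_right ?_ (by positivity)
          simpa [card_compl] using ih ↥(t.1ᶜ) {b // b ≠ b₀} hβ'
      _ = expTail m r ^ p * ∑ s ∈ Icc (m + 1) k, k.choose s • ((k - s)! * r ^ s) := by
          rw [← sum_card_gt_eq_sum_choose_smul m (fun s => ((k - s)! * r ^ s : ℝ)), mul_sum]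
          exact sum_congr rfl fun _ _ => by ring
      _ = expTail m r ^ p * (k ! * ∑ s ∈ Icc (m + 1) k, r ^ s / s !) := by
          congr 1
          rw [mul_sum]
          refine sum_congr rfl fun s hs => ?_
          rw [nsmul_eq_mul, ← mul_assoc, choose_mul_factorial_sub (mem_Icc.1 hs).2]
          ring
      _ ≤ expTail m r ^ p * (k ! * expTail m r) := by
          gcongr
          · exact pow_nonneg (expTail_nonneg hr m) p
          · exact sum_Icc_pow_div_factorial_le_expTail hr m k
      _ = k ! * expTail m r ^ (p + 1) := by ring

namespace Finpartition

variable {α β : Type*} [DecidableEq α]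

lemma parts_eq_image_part {s : Finset α} (P : Finpartition s) : P.parts = s.image P.part := by
  ext t
  refine ⟨fun ht => ?_, fun ht => ?_⟩
  · obtain ⟨a, ha, rfl⟩ := P.part_surjOn ht
    exact mem_image_of_mem _ ha
  · obtain ⟨a, ha, rfl⟩ := mem_image.1 ht
    exact P.part_mem.2 ha

lemma eq_of_part_eq {s : Finset α} {P Q : Finpartition s} (h : ∀ a ∈ s, P.part a = Q.part a) :
    P = Q :=
  Finpartition.ext <| by rw [parts_eq_image_part, parts_eq_image_part, image_congr h]

variable [Fintype α]

def label (P : Finpartition (univ : Finset α)) (e : P.parts ≃ β) (a : α) : β :=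
  e ⟨P.part a, P.part_mem.2 (mem_univ a)⟩

lemma label_eq_iff_mem (P : Finpartition (univ : Finset α)) (e : P.parts ≃ β) (a : α) (b : β) :
    P.label e a = b ↔ a ∈ (e.symm b : Finset α) := by
  rw [label, ← Equiv.eq_symm_apply, Subtype.ext_iff, P.part_eq_iff_mem (e.symm b).2]

lemma filter_label_eq [DecidableEq β] (P : Finpartition (univ : Finset α)) (e : P.parts ≃ β)
    (b : β) : ({a | P.label e a = b} : Finset α) = e.symm b := by
  ext a
  rw [mem_filter_univ, label_eq_iff_mem]

lemma label_injective :
    Function.Injective fun x : Σ P : Finpartition (univ : Finset α), P.parts ≃ β =>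
      x.1.label x.2 := by
  rintro ⟨P, e⟩ ⟨Q, e'⟩ h
  have mem_part_iff (R : Finpartition (univ : Finset α)) (e : R.parts ≃ β) (a a' : α) :
      a' ∈ R.part a ↔ R.label e a' = R.label e a := by
    rw [label_eq_iff_mem, label, Equiv.symm_apply_apply]
  obtain rfl : P = Q := eq_of_part_eq fun a _ => by
    ext a'
    rw [mem_part_iff P e, mem_part_iff Q e']
    exact Eq.congr (congrFun h a') (congrFun h a)
  obtain rfl : e = e' := Equiv.ext fun t => by
    obtain ⟨a, -, hat⟩ := P.part_surjOn t.2
    simpa [label, hat] using congrFun h a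
  rfl

end Finpartition

theorem card_roughFinpartition_mul_factorial_le (m : ℕ) (α β : Type*) [Fintype α] [DecidableEq α]
    [Fintype β] [DecidableEq β] :
    Fintype.card {P : Finpartition (univ : Finset α) //
        (∀ t ∈ P.parts, m < #t) ∧ #P.parts = Fintype.card β} * (Fintype.card β)! ≤
      Fintype.card (RoughMap m α β) := by
  set Rough := {P : Finpartition (univ : Finset α) //
    (∀ t ∈ P.parts, m < #t) ∧ #P.parts = Fintype.card β}
  let toRoughMap (x : Σ P : Rough, P.1.parts ≃ β) : RoughMap m α β :=
    ⟨x.1.1.label x.2, fun b => by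
      rw [Finpartition.filter_label_eq]; exact x.1.2.1 _ (x.2.symm b).2⟩
  have htoRoughMap : Function.Injective toRoughMap := by
    rintro ⟨⟨P, hP⟩, e⟩ ⟨⟨Q, hQ⟩, e'⟩ h
    cases Finpartition.label_injective (a₁ := ⟨P, e⟩) (a₂ := ⟨Q, e'⟩) (congrArg Subtype.val h)
    rfl
  have hcard (P : Rough) : Fintype.card (P.1.parts ≃ β) = (Fintype.card β)! :=
    (Fintype.card_equiv (Fintype.equivOfCardEq (by simpa using P.2.2))).trans (by simp [P.2.2])
  simpa [Fintype.card_sigma, hcard] using Fintype.card_le_of_injective _ htoRoughMap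

lemma card_subtype_eq_sum_card_parts_eq {α : Type*} [Fintype α] [DecidableEq α]
    (q : Finpartition (univ : Finset α) → Prop) [DecidablePred q] :
    Fintype.card {P // q P} =
      ∑ p ∈ range (Fintype.card α + 1), Fintype.card {P // q P ∧ #P.parts = p} := by
  rw [Fintype.card_subtype, card_eq_sum_card_fiberwise (f := fun P => #P.parts)
    (t := range (Fintype.card α + 1))]
  · simp only [Fintype.card_subtype, filter_filter]
  · intro P _
    simpa [Nat.lt_add_one_iff] using P.card_parts_le_card

theorem card_roughFinpartition_mul_pow_le {r : ℝ} (hr : 0 ≤ r) (m : ℕ) (α : Type*) [Fintype α]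
    [DecidableEq α] :
    (Fintype.card {P : Finpartition (univ : Finset α) // ∀ t ∈ P.parts, m < #t} : ℝ) *
        r ^ Fintype.card α ≤ (Fintype.card α)! * Real.exp (expTail m r) := by
  set k := Fintype.card α
  have hp (p : ℕ) : (Fintype.card {P : Finpartition (univ : Finset α) //
      (∀ t ∈ P.parts, m < #t) ∧ #P.parts = p} : ℝ) * r ^ k ≤ k ! * (expTail m r ^ p / p !) := by
    have hlabel := card_roughFinpartition_mul_factorial_le m α (Fin p)
    have hmaps := card_roughMap_mul_pow_le hr m p α (Fin p) (Fintype.card_fin p)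
    rw [Fintype.card_fin] at hlabel
    rw [mul_div_assoc', le_div_iff₀ (by positivity), mul_right_comm]
    calc _ ≤ (Fintype.card (RoughMap m α (Fin p)) : ℝ) * r ^ k := by gcongr; exact_mod_cast hlabel
      _ ≤ k ! * expTail m r ^ p := hmaps
  calc _ = ∑ p ∈ range (k + 1), (Fintype.card {P : Finpartition (univ : Finset α) //
          (∀ t ∈ P.parts, m < #t) ∧ #P.parts = p} : ℝ) * r ^ k := by
        rw [card_subtype_eq_sum_card_parts_eq, Nat.cast_sum, sum_mul]
    _ ≤ ∑ p ∈ range (k + 1), k ! * (expTail m r ^ p / p !) := sum_le_sum fun p _ => hp p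
    _ ≤ k ! * Real.exp (expTail m r) := by
        rw [← mul_sum]
        gcongr
        exact Real.sum_le_exp_of_nonneg (expTail_nonneg hr m) _

theorem rough_count_upper_bound_general (r : ℝ) (hr : 0 < r) (n : ℕ) (m : ℕ) :
    (Brough n m : ℝ) ≤ (n.factorial : ℝ) *
      Real.exp (Real.exp r - ∑ j ∈ Finset.range (m + 1), r ^ j / (j.factorial : ℝ)) / r ^ n := by
  rw [le_div_iff₀ (by positivity), Brough, Nat.card_eq_fintype_card]
  simpa [expTail] using card_roughFinpartition_mul_pow_le hr.le m (Fin n)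

/-- For every `r > 0`, `n ≥ 1`, `m ≥ 0`:
`B_{n,m} ≤ n! · exp(e^r − β_m(r)) / r^n`, where `β_m(r) = ∑_{j=0}^m r^j/j!`. -/
theorem rough_count_upper_bound (r : ℝ) (hr : 0 < r) (n : ℕ) (hn : 1 ≤ n) (m : ℕ) :
    (Brough n m : ℝ) ≤ (n.factorial : ℝ) *
      Real.exp (Real.exp r - ∑ j ∈ Finset.range (m + 1), r ^ j / (j.factorial : ℝ)) / r ^ n :=
  rough_count_upper_bound_general r hr n m
end

section
/- For every set S of positive integers and real r > 0, the derivative bound α''(r) ≤ 3 + 3·α'(r) holds, where α(z) = Σ_{k∈S} z^k/k!; more precisely, Σ_{k∈S, k≥2} r^{k−2}/(k−2)! ≤ 3 + 3·Σ_{k∈S, k≥1} r^{k−1}/(k−1)!. -/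
/-!
Write `a m = r ^ m / m !`, so that `α''(r) = ∑_{k ∈ S} a (k - 2)` and `α'(r) = ∑_{k ∈ S} a (k - 1)`.
Since `a (m + 1) = a m * r / (m + 1)`, a term with `m + 1 ≤ 3r` satisfies `a m ≤ 3 a (m + 1)`.
A term with `m + 1 > 3r` satisfies `a m ≤ 3 ^ (1 - 3r) (3r) ^ m / m !`, and these majorants sum to
`3 ^ (1 - 3r) e ^ (3r) ≤ 3` because `e ≤ 3`.
-/

open Nat Real

lemma rpow_one_sub_mul_exp_le {x : ℝ} (hx : 0 ≤ x) : (3 : ℝ) ^ (1 - x) * exp x ≤ 3 := by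
  have hexp : exp x ≤ (3 : ℝ) ^ x := by
    rw [← exp_one_rpow]
    exact rpow_le_rpow (exp_pos 1).le exp_one_lt_three.le hx
  calc (3 : ℝ) ^ (1 - x) * exp x ≤ 3 ^ (1 - x) * 3 ^ x := by gcongr
    _ = 3 := by rw [← rpow_add (by norm_num), sub_add_cancel, rpow_one]

lemma pow_div_factorial_le {r : ℝ} (hr : 0 ≤ r) (m : ℕ) :
    r ^ m / m ! ≤ 3 * (r ^ (m + 1) / (m + 1)!) + (3 : ℝ) ^ (1 - 3 * r) * ((3 * r) ^ m / m !) := by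
  rcases le_or_gt ((m : ℝ) + 1) (3 * r) with hm | hm
  · refine le_add_of_le_of_nonneg ?_ (by positivity)
    have hsucc : 3 * (r ^ (m + 1) / (m + 1)!) = r ^ m / m ! * (3 * r / (m + 1)) := by
      rw [pow_succ, Nat.factorial_succ, Nat.cast_mul]
      push_cast
      field_simp
    rw [hsucc]
    exact le_mul_of_one_le_right (by positivity) ((one_le_div (by positivity)).mpr hm)
  · refine le_add_of_nonneg_of_le (by positivity) ?_
    rw [mul_div_assoc', mul_pow, ← mul_assoc]
    gcongr
    have hexp : (0 : ℝ) ≤ 1 - 3 * r + m := by linarith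
    calc r ^ m = 1 * r ^ m := (one_mul _).symm
      _ ≤ 3 ^ (1 - 3 * r) * 3 ^ m * r ^ m := by
        gcongr
        rw [← rpow_natCast, ← rpow_add (by norm_num)]
        exact one_le_rpow (by norm_num) hexp

lemma summable_pow_sub_div_factorial (r : ℝ) (j : ℕ) :
    Summable fun k : ℕ => r ^ (k - j) / (k - j)! := by
  rw [← summable_nat_add_iff j]
  simpa using Real.summable_pow_div_factorial r

lemma tsum_indicator_pow_div_factorial_le (T : Set ℕ) {r : ℝ} (hr : 0 ≤ r) :
    ∑' m, T.indicator (fun m => r ^ m / m !) m ≤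
      3 + 3 * ∑' m, T.indicator (fun m => r ^ (m + 1) / (m + 1)!) m := by
  set c : ℝ := 3 ^ (1 - 3 * r)
  have hsucc : Summable (T.indicator fun m => r ^ (m + 1) / (m + 1)!) :=
    ((summable_nat_add_iff 1).mpr (Real.summable_pow_div_factorial r)).indicator T
  have htail : HasSum (fun m => c * ((3 * r) ^ m / m !)) (c * exp (3 * r)) := by
    rw [exp_eq_exp_ℝ]
    exact (NormedSpace.expSeries_div_hasSum_exp (3 * r)).mul_left c
  have hpoint : ∀ m, T.indicator (fun m => r ^ m / m !) m ≤
      3 * T.indicator (fun m => r ^ (m + 1) / (m + 1)!) m + c * ((3 * r) ^ m / m !) := by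
    intro m
    by_cases hm : m ∈ T
    · simpa [hm] using pow_div_factorial_le hr m
    · simp only [Set.indicator_of_notMem hm, mul_zero, zero_add]
      positivity
  calc ∑' m, T.indicator (fun m => r ^ m / m !) m
      ≤ ∑' m, (3 * T.indicator (fun m => r ^ (m + 1) / (m + 1)!) m + c * ((3 * r) ^ m / m !)) :=
        ((Real.summable_pow_div_factorial r).indicator T).tsum_le_tsum hpoint
          ((hsucc.mul_left 3).add htail.summable)
    _ = 3 * ∑' m, T.indicator (fun m => r ^ (m + 1) / (m + 1)!) m + c * exp (3 * r) := by
        rw [(hsucc.mul_left 3).tsum_add htail.summable, tsum_mul_left, htail.tsum_eq]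
    _ ≤ 3 + 3 * ∑' m, T.indicator (fun m => r ^ (m + 1) / (m + 1)!) m := by
        linarith [rpow_one_sub_mul_exp_le (by positivity : 0 ≤ 3 * r)]

open Classical in
theorem alpha_second_deriv_bound_general (S : Set ℕ) (r : ℝ) (hr : 0 < r) :
    (∑' k : ℕ, if k ∈ S ∧ 2 ≤ k then r ^ (k - 2) / ((k - 2).factorial : ℝ) else 0) ≤
      3 + 3 * ∑' k : ℕ, if k ∈ S ∧ 1 ≤ k then r ^ (k - 1) / ((k - 1).factorial : ℝ) else 0 := by
  set T : Set ℕ := {m | m + 2 ∈ S}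
  have hlhs : (∑' k : ℕ, if k ∈ S ∧ 2 ≤ k then r ^ (k - 2) / ((k - 2).factorial : ℝ) else 0) =
      ∑' m, T.indicator (fun m => r ^ m / m !) m := by
    rw [← (add_left_injective 2).tsum_eq]
    · simp [T, Set.indicator_apply]
    · intro k hk
      have hk2 : 2 ≤ k := by
        by_contra h
        simp [h] at hk
      exact ⟨k - 2, Nat.sub_add_cancel hk2⟩
  have hrhs : ∑' m, T.indicator (fun m => r ^ (m + 1) / (m + 1)!) m ≤
      ∑' k : ℕ, if k ∈ S ∧ 1 ≤ k then r ^ (k - 1) / ((k - 1).factorial : ℝ) else 0 := by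
    have hsum : Summable fun k : ℕ =>
        if k ∈ S ∧ 1 ≤ k then r ^ (k - 1) / ((k - 1).factorial : ℝ) else 0 :=
      .of_nonneg_of_le (fun k => by split_ifs <;> positivity)
        (fun k => by split_ifs <;> [exact le_rfl; positivity])
        (summable_pow_sub_div_factorial r 1)
    convert tsum_comp_le_tsum_of_inj hsum (fun k => by split_ifs <;> positivity)
      (add_left_injective 2) using 2
    ext m
    simp [T, Set.indicator_apply]
  rw [hlhs]
  linarith [tsum_indicator_pow_div_factorial_le T hr.le]

open Classical in
/-- For a set `S` of positive integers and `r > 0`, `α''(r) ≤ 3 + 3 α'(r)`: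
`∑_{k∈S, k≥2} r^{k−2}/(k−2)! ≤ 3 + 3 ∑_{k∈S, k≥1} r^{k−1}/(k−1)!`. -/
theorem alpha_second_deriv_bound (S : Set ℕ) (hS : ∀ k ∈ S, 1 ≤ k) (r : ℝ) (hr : 0 < r) :
    (∑' k : ℕ, if k ∈ S ∧ 2 ≤ k then r ^ (k - 2) / ((k - 2).factorial : ℝ) else 0) ≤
      3 + 3 * ∑' k : ℕ, if k ∈ S ∧ 1 ≤ k then r ^ (k - 1) / ((k - 1).factorial : ℝ) else 0 :=
  alpha_second_deriv_bound_general S r hr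
end

section
/- In the decomposition of an arbitrary set partition of an n-set: if the blocks are sorted by size a_1 ≤ ... ≤ a_l and l_0 is the largest index such that a_i ≤ 1 + Σ_{j<i} a_j holds for all i ≤ l_0 (with l_0 = 0 if a_1 > 1), then the blocks of sizes a_1,...,a_{l_0} form a practical set partition of a set of k = Σ_{j≤l_0} a_j elements, and the remaining blocks all have size strictly greater than k + 1. -/
namespace List

/-- Adding an entry `x ≤ 1 + b.sum` to `b`: the new targets in `(b.sum, b.sum + x]` are `x` plus
an old target in `[0, b.sum]`. -/
theorem exists_sublist_sum_eq_of_getElem_le_one_add_sum_take (b : List ℕ)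
    (h : ∀ i (hi : i < b.length), b[i] ≤ 1 + (b.take i).sum) :
    ∀ m ≤ b.sum, ∃ t : List ℕ, t.Sublist b ∧ t.sum = m := by
  induction b using List.reverseRecOn with
  | nil => exact fun m hm => ⟨[], Sublist.refl _, by simp_all⟩
  | append_singleton b x ih =>
    have hx : x ≤ 1 + b.sum := by simpa using h b.length (by simp)
    have hb : ∀ i (hi : i < b.length), b[i] ≤ 1 + (b.take i).sum := fun i hi => by
      have := h i (by simp; omega)
      rwa [getElem_append_left hi, take_append_of_le_length hi.le] at this
    intro m hm
    rw [sum_append, sum_singleton] at hm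
    by_cases hmb : m ≤ b.sum
    · obtain ⟨t, ht, rfl⟩ := ih hb m hmb
      exact ⟨t, ht.trans (sublist_append_left b [x]), rfl⟩
    · obtain ⟨t, ht, hsum⟩ := ih hb (m - x) (by omega)
      refine ⟨t ++ [x], ht.append (Sublist.refl _), ?_⟩
      rw [sum_append, sum_singleton, hsum]
      omega

end List

theorem partition_decomposition_general (a : List ℕ) (hsort : a.Pairwise (· ≤ ·))
    (l0 : ℕ)
    (hcond : ∀ i : Fin a.length, (i : ℕ) < l0 → a.get i ≤ 1 + (a.take i).sum)
    (hmax : ∀ h : l0 < a.length, 1 + (a.take l0).sum < a.get ⟨l0, h⟩) :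
    (∀ m ≤ (a.take l0).sum, ∃ t : List ℕ, t.Sublist (a.take l0) ∧ t.sum = m) ∧
    (∀ i : Fin a.length, l0 ≤ (i : ℕ) → (a.take l0).sum + 1 < a.get i) := by
  constructor
  · refine List.exists_sublist_sum_eq_of_getElem_le_one_add_sum_take _ fun i hi => ?_
    obtain ⟨hil, hia⟩ : i < l0 ∧ i < a.length := by simpa using hi
    simpa [List.take_take, hil.le] using hcond ⟨i, hia⟩ hil
  · intro i hi
    have hl0a : l0 < a.length := lt_of_le_of_lt hi i.isLt
    have hmono : a.get ⟨l0, hl0a⟩ ≤ a.get i := hsort.rel_get_of_le hi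
    have := hmax hl0a
    omega

/-- Structural decomposition of a partition by its sorted list `a` of (positive) block
sizes: if `l0` is the largest index such that `a_i ≤ 1 + Σ_{j<i} a_j` for all `i ≤ l0`
(with `l0 = 0` if `a_1 > 1`), then, with `k = Σ_{j ≤ l0} a_j`, the first `l0` blocks form
a practical partition of a `k`-element set (every `m ≤ k` is one of their subset sums),
and every remaining block has size strictly greater than `k + 1`. -/
theorem partition_decomposition (a : List ℕ) (hsort : a.Pairwise (· ≤ ·))
    (hpos : ∀ x ∈ a, 0 < x) (l0 : ℕ) (hl0 : l0 ≤ a.length)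
    (hcond : ∀ i : Fin a.length, (i : ℕ) < l0 → a.get i ≤ 1 + (a.take i).sum)
    (hmax : ∀ h : l0 < a.length, 1 + (a.take l0).sum < a.get ⟨l0, h⟩) :
    (∀ m ≤ (a.take l0).sum, ∃ t : List ℕ, t.Sublist (a.take l0) ∧ t.sum = m) ∧
    (∀ i : Fin a.length, l0 ≤ (i : ℕ) → (a.take l0).sum + 1 < a.get i) :=
  partition_decomposition_general a hsort l0 hcond hmax
end
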